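/- arXiv:2405.06458 — 2 statements merged into one kernel-verified Lean document; each statement's English description precedes it below -/
import Mathlib

section
/- Let N_t ≥ 1, n ≥ 1, let M ∈ ℝ^{n×n} be symmetric, K ∈ ℝ^{n×n} arbitrary, τ > 0, α ∈ ℝ, and let ŷ = (ŷ₁,…,ŷ_{N_t}) ∈ ℝ^{N_t n}. Define the discrete Lagrangian L : ℝ^{N_t n} × ℝ^{N_t n} × ℝ^{N_t n} → ℝ by L(y, u, μ) = Σ_{ℓ=1}^{N_t} [ (τ/2)( (y_ℓ − ŷ_ℓ)ᵀ M (y_ℓ − ŷ_ℓ) + α u_ℓᵀ M u_ℓ ) + μ_ℓᵀ ( M y_ℓ − M y_{ℓ−1} + τ K y_ℓ − τ M u_ℓ ) ], with the convention y₀ = 0. Then the total derivative of L at (y, u, μ) vanishes if and only if (y, u, μ) satisfies the block linear system τ𝓜 y + 𝓚ᵀ μ = τ𝓜 ŷ, τα𝓜 u − τ𝓜 μ = 0, and 𝓚 y − τ𝓜 u = 0, where 𝓜 = I_{N_t} ⊗ M, 𝓚 = I_{N_t} ⊗ (τK) + C ⊗ M, I_{N_t} is the N_t×N_t identity matrix,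 ⊗ denotes the Kronecker product of matrices, and C ∈ ℝ^{N_t×N_t} is the lower bidiagonal matrix with entries C_{ℓℓ} = 1, C_{ℓ,ℓ−1} = −1 and all other entries 0. -/
open Matrix Kronecker

namespace DLKKT

variable {Nt n : ℕ}

def prev {β : Type*} [Zero β] (x : Fin Nt → β) (ℓ : Fin Nt) : β :=
  if h : (ℓ : ℕ) = 0 then 0 else x ⟨(ℓ : ℕ) - 1, lt_of_le_of_lt (Nat.sub_le _ _) ℓ.isLt⟩

def nxt {β : Type*} [Zero β] (x : Fin Nt → β) (ℓ : Fin Nt) : β :=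
  if h : (ℓ : ℕ) + 1 < Nt then x ⟨(ℓ : ℕ) + 1, h⟩ else 0

lemma sum_if_eq_pred (c : Fin Nt → ℝ) (ℓ : Fin Nt) :
    ∑ k : Fin Nt, (if (k : ℕ) + 1 = (ℓ : ℕ) then c k else 0) = prev c ℓ := by
  unfold prev
  split_ifs with h
  · apply Finset.sum_eq_zero; intro k _; rw [if_neg]; omega
  · rw [Finset.sum_eq_single (⟨(ℓ : ℕ) - 1, lt_of_le_of_lt (Nat.sub_le _ _) ℓ.isLt⟩ : Fin Nt)]
    · simp only [Fin.val_mk]; rw [if_pos (by omega)]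
    · intro k _ hk; rw [if_neg]; intro hc; exact hk (Fin.ext (by simp only [Fin.val_mk]; omega))
    · intro h'; exact absurd (Finset.mem_univ _) h'

lemma sum_if_eq_succ (c : Fin Nt → ℝ) (ℓ : Fin Nt) :
    ∑ k : Fin Nt, (if (ℓ : ℕ) + 1 = (k : ℕ) then c k else 0) = nxt c ℓ := by
  unfold nxt
  split_ifs with h
  · rw [Finset.sum_eq_single (⟨(ℓ : ℕ) + 1, h⟩ : Fin Nt)]
    · simp only [Fin.val_mk, if_true]
    · intro k _ hk; rw [if_neg]; intro hc; exact hk (Fin.ext (by simp only [Fin.val_mk]; omega))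
    · intro h'; exact absurd (Finset.mem_univ _) h'
  · apply Finset.sum_eq_zero; intro k _; rw [if_neg]; have := k.isLt; omega

lemma scalar_shift (g w : Fin Nt → ℝ) :
    ∑ ℓ, g ℓ * prev w ℓ = ∑ ℓ, nxt g ℓ * w ℓ := by
  have h1 : ∀ ℓ : Fin Nt, g ℓ * prev w ℓ
      = ∑ k : Fin Nt, if (k : ℕ) + 1 = (ℓ : ℕ) then g ℓ * w k else 0 := by
    intro ℓ
    rw [sum_if_eq_pred (fun k => g ℓ * w k) ℓ]
    unfold prev; split_ifs <;> simp
  have h2 : ∀ k : Fin Nt, nxt g k * w k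
      = ∑ ℓ : Fin Nt, if (k : ℕ) + 1 = (ℓ : ℕ) then g ℓ * w k else 0 := by
    intro k
    rw [sum_if_eq_succ (fun ℓ => g ℓ * w k) k]
    unfold nxt; split_ifs <;> simp
  simp_rw [h1, h2]
  exact Finset.sum_comm

lemma prev_apply (a : Fin Nt → Fin n → ℝ) (ℓ : Fin Nt) (i : Fin n) :
    prev a ℓ i = prev (fun k => a k i) ℓ := by
  unfold prev; split_ifs <;> simp

lemma nxt_apply (f : Fin Nt → Fin n → ℝ) (ℓ : Fin Nt) (i : Fin n) :
    nxt f ℓ i = nxt (fun k => f k i) ℓ := by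
  unfold nxt; split_ifs <;> simp

lemma dot_shift (f a : Fin Nt → Fin n → ℝ) :
    ∑ ℓ, f ℓ ⬝ᵥ prev a ℓ = ∑ ℓ, nxt f ℓ ⬝ᵥ a ℓ := by
  simp only [dotProduct]
  rw [Finset.sum_comm, Finset.sum_comm (γ := Fin Nt)]
  apply Finset.sum_congr rfl
  intro i _
  simp_rw [prev_apply, nxt_apply]
  exact scalar_shift (fun ℓ => f ℓ i) (fun k => a k i)

lemma sum_C_row (v : Fin Nt → ℝ) (ℓ : Fin Nt) :
    ∑ k : Fin Nt, (if ℓ = k then (1:ℝ) else if (k : ℕ) + 1 = (ℓ : ℕ) then -1 else 0) * v k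
      = v ℓ - prev v ℓ := by
  have h : ∀ k : Fin Nt, (if ℓ = k then (1:ℝ) else if (k : ℕ) + 1 = (ℓ : ℕ) then -1 else 0) * v k
      = (if ℓ = k then v k else 0) - (if (k : ℕ) + 1 = (ℓ : ℕ) then v k else 0) := by
    intro k
    split_ifs with h1 h2 <;> first | (subst h1; omega) | ring
  simp_rw [h]
  rw [Finset.sum_sub_distrib, Finset.sum_ite_eq, sum_if_eq_pred]
  simp

lemma sum_C_col (v : Fin Nt → ℝ) (ℓ : Fin Nt) :
    ∑ k : Fin Nt, (if k = ℓ then (1:ℝ) else if (ℓ : ℕ) + 1 = (k : ℕ) then -1 else 0) * v k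
      = v ℓ - nxt v ℓ := by
  have h : ∀ k : Fin Nt, (if k = ℓ then (1:ℝ) else if (ℓ : ℕ) + 1 = (k : ℕ) then -1 else 0) * v k
      = (if k = ℓ then v k else 0) - (if (ℓ : ℕ) + 1 = (k : ℕ) then v k else 0) := by
    intro k
    split_ifs with h1 h2 <;> first | (subst h1; omega) | ring
  simp_rw [h]
  rw [Finset.sum_sub_distrib, Finset.sum_ite_eq', sum_if_eq_succ]
  simp

lemma kron_one_mulVec (A : Matrix (Fin n) (Fin n) ℝ) (V : Fin Nt × Fin n → ℝ)
    (ℓ : Fin Nt) (i : Fin n) :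
    (((1 : Matrix (Fin Nt) (Fin Nt) ℝ) ⊗ₖ A) *ᵥ V) (ℓ, i) = (A *ᵥ fun j => V (ℓ, j)) i := by
  simp only [Matrix.mulVec, dotProduct, Fintype.sum_prod_type, kroneckerMap_apply,
    Matrix.one_apply, ite_mul, one_mul, zero_mul]
  rw [Finset.sum_comm]
  refine Finset.sum_congr rfl fun j _ => ?_
  rw [Finset.sum_ite_eq]
  simp

lemma kron_one_transpose_mulVec (A : Matrix (Fin n) (Fin n) ℝ) (V : Fin Nt × Fin n → ℝ)
    (ℓ : Fin Nt) (i : Fin n) :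
    ((((1 : Matrix (Fin Nt) (Fin Nt) ℝ) ⊗ₖ A)ᵀ) *ᵥ V) (ℓ, i)
      = (Aᵀ *ᵥ fun j => V (ℓ, j)) i := by
  simp only [Matrix.mulVec, dotProduct, Fintype.sum_prod_type, Matrix.transpose_apply,
    kroneckerMap_apply, Matrix.one_apply, ite_mul, one_mul, zero_mul]
  rw [Finset.sum_comm]
  refine Finset.sum_congr rfl fun j _ => ?_
  rw [Finset.sum_ite_eq']
  simp

lemma kronC_mulVec (C : Matrix (Fin Nt) (Fin Nt) ℝ) (M : Matrix (Fin n) (Fin n) ℝ)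
    (V : Fin Nt × Fin n → ℝ) (ℓ : Fin Nt) (i : Fin n) :
    ((C ⊗ₖ M) *ᵥ V) (ℓ, i) = ∑ k : Fin Nt, C ℓ k * (M *ᵥ fun j => V (k, j)) i := by
  simp only [Matrix.mulVec, dotProduct, Fintype.sum_prod_type, kroneckerMap_apply,
    Finset.mul_sum, mul_assoc]

lemma kronC_transpose_mulVec (C : Matrix (Fin Nt) (Fin Nt) ℝ) (M : Matrix (Fin n) (Fin n) ℝ)
    (V : Fin Nt × Fin n → ℝ) (ℓ : Fin Nt) (i : Fin n) :
    (((C ⊗ₖ M)ᵀ) *ᵥ V) (ℓ, i) = ∑ k : Fin Nt, C k ℓ * (Mᵀ *ᵥ fun j => V (k, j)) i := by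
  simp only [Matrix.mulVec, dotProduct, Fintype.sum_prod_type, Matrix.transpose_apply,
    kroneckerMap_apply, Finset.mul_sum, mul_assoc]

variable (M K : Matrix (Fin n) (Fin n) ℝ) (τ α : ℝ) (yhat : Fin Nt → Fin n → ℝ)

lemma prev_add_smul (x a : Fin Nt → Fin n → ℝ) (t : ℝ) (ℓ : Fin Nt) :
    prev (x + t • a) ℓ = prev x ℓ + t • prev a ℓ := by
  unfold prev; split_ifs with h <;> simp

lemma mulVec_prev (x : Fin Nt → Fin n → ℝ) (ℓ : Fin Nt) :
    M *ᵥ prev x ℓ = prev (fun k => M *ᵥ x k) ℓ := by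
  unfold prev; split_ifs with h <;> simp

lemma mulVec_nxt (x : Fin Nt → Fin n → ℝ) (ℓ : Fin Nt) :
    M *ᵥ nxt x ℓ = nxt (fun k => M *ᵥ x k) ℓ := by
  unfold nxt; split_ifs with h <;> simp

def Rv (x v : Fin Nt → Fin n → ℝ) (ℓ : Fin Nt) : Fin n → ℝ :=
  M *ᵥ x ℓ - M *ᵥ prev x ℓ + τ • (K *ᵥ x ℓ) - τ • (M *ᵥ v ℓ)

lemma Rv_add_smul (x v a b : Fin Nt → Fin n → ℝ) (t : ℝ) (ℓ : Fin Nt) :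
    Rv M K τ (x + t • a) (v + t • b) ℓ = Rv M K τ x v ℓ + t • Rv M K τ a b ℓ := by
  unfold Rv
  simp only [Pi.add_apply, Pi.smul_apply, prev_add_smul, mulVec_add, mulVec_smul,
    smul_add, smul_sub]
  module

noncomputable def Fn
    (p : (Fin Nt → Fin n → ℝ) × (Fin Nt → Fin n → ℝ) × (Fin Nt → Fin n → ℝ)) : ℝ :=
  ∑ ℓ : Fin Nt,
    (τ / 2 * ((p.1 ℓ - yhat ℓ) ⬝ᵥ M.mulVec (p.1 ℓ - yhat ℓ)
        + α * (p.2.1 ℓ ⬝ᵥ M.mulVec (p.2.1 ℓ)))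
      + p.2.2 ℓ ⬝ᵥ
        (M.mulVec (p.1 ℓ)
          - M.mulVec (if h : (ℓ : ℕ) = 0 then 0
              else p.1 ⟨(ℓ : ℕ) - 1, lt_of_le_of_lt (Nat.sub_le _ _) ℓ.isLt⟩)
          + τ • K.mulVec (p.1 ℓ) - τ • M.mulVec (p.2.1 ℓ)))

lemma Fn_eq (p) : Fn M K τ α yhat p
    = ∑ ℓ : Fin Nt,
      (τ / 2 * ((p.1 ℓ - yhat ℓ) ⬝ᵥ M *ᵥ (p.1 ℓ - yhat ℓ)
          + α * (p.2.1 ℓ ⬝ᵥ M *ᵥ (p.2.1 ℓ)))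
        + p.2.2 ℓ ⬝ᵥ Rv M K τ p.1 p.2.1 ℓ) := rfl

noncomputable def Dfun (y u μ a b c : Fin Nt → Fin n → ℝ) : ℝ :=
  ∑ ℓ : Fin Nt,
    (τ * ((y ℓ - yhat ℓ) ⬝ᵥ M *ᵥ a ℓ) + τ * α * (u ℓ ⬝ᵥ M *ᵥ b ℓ)
      + c ℓ ⬝ᵥ Rv M K τ y u ℓ + μ ℓ ⬝ᵥ Rv M K τ a b ℓ)

noncomputable def Qfun (a b c : Fin Nt → Fin n → ℝ) : ℝ :=
  ∑ ℓ : Fin Nt,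
    (τ / 2 * (a ℓ ⬝ᵥ M *ᵥ a ℓ + α * (b ℓ ⬝ᵥ M *ᵥ b ℓ)) + c ℓ ⬝ᵥ Rv M K τ a b ℓ)

lemma swap (hM : M.IsSymm) (v w : Fin n → ℝ) : w ⬝ᵥ M *ᵥ v = v ⬝ᵥ M *ᵥ w := by
  rw [dotProduct_mulVec, ← Matrix.mulVec_transpose, hM.eq, dotProduct_comm]

lemma swapM (hM : M.IsSymm) (v w : Fin n → ℝ) : v ⬝ᵥ M *ᵥ w = (M *ᵥ v) ⬝ᵥ w := by
  rw [dotProduct_mulVec, ← Matrix.mulVec_transpose, hM.eq]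

lemma swapK (v w : Fin n → ℝ) : v ⬝ᵥ K *ᵥ w = (Kᵀ *ᵥ v) ⬝ᵥ w := by
  rw [dotProduct_mulVec, ← Matrix.mulVec_transpose]

lemma expand (hM : M.IsSymm) (y u μ a b c : Fin Nt → Fin n → ℝ) (t : ℝ) :
    Fn M K τ α yhat ((y, u, μ) + t • (a, b, c))
      = Fn M K τ α yhat (y, u, μ) + t * Dfun M K τ α yhat y u μ a b c
        + t ^ 2 * Qfun M K τ α a b c := by
  have hq : ∀ v w : Fin n → ℝ,
      (v + t • w) ⬝ᵥ M *ᵥ (v + t • w)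
        = v ⬝ᵥ M *ᵥ v + 2 * t * (v ⬝ᵥ M *ᵥ w) + t ^ 2 * (w ⬝ᵥ M *ᵥ w) := by
    intro v w
    rw [mulVec_add, mulVec_smul, dotProduct_add, add_dotProduct, add_dotProduct,
      dotProduct_smul, smul_dotProduct, smul_dotProduct, dotProduct_smul,
      swap M hM v w]
    simp only [smul_eq_mul]; ring
  rw [Fn_eq, Fn_eq]
  unfold Dfun Qfun
  rw [Finset.mul_sum, Finset.mul_sum, ← Finset.sum_add_distrib, ← Finset.sum_add_distrib]
  refine Finset.sum_congr rfl fun ℓ _ => ?_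
  have h1 : ((y, u, μ) + t • (a, b, c)).1 = y + t • a := rfl
  have h2 : ((y, u, μ) + t • (a, b, c)).2.1 = u + t • b := rfl
  have h3 : ((y, u, μ) + t • (a, b, c)).2.2 = μ + t • c := rfl
  rw [h1, h2, h3, Rv_add_smul]
  have hy : (y + t • a) ℓ - yhat ℓ = (y ℓ - yhat ℓ) + t • a ℓ := by
    simp; abel
  rw [hy]
  simp only [Pi.add_apply, Pi.smul_apply]
  rw [hq, hq]
  simp only [add_dotProduct, dotProduct_add, smul_dotProduct, dotProduct_smul, smul_eq_mul]
  ring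

lemma differentiable_Fn : Differentiable ℝ (Fn M K τ α yhat) := by
  unfold Fn
  apply Differentiable.fun_sum
  intro ℓ _
  by_cases h : (ℓ : ℕ) = 0 <;>
    simp only [h, dite_true, dif_pos, dif_neg, not_false_iff, dotProduct, Matrix.mulVec,
      Pi.sub_apply, Pi.add_apply, Pi.zero_apply, Pi.smul_apply, smul_eq_mul,
      Matrix.mulVec_zero] <;>
    fun_prop

lemma fderiv_eq (hM : M.IsSymm) (y u μ a b c : Fin Nt → Fin n → ℝ) :
    fderiv ℝ (Fn M K τ α yhat) (y, u, μ) (a, b, c)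
      = Dfun M K τ α yhat y u μ a b c := by
  rw [← (differentiable_Fn M K τ α yhat (y, u, μ)).lineDeriv_eq_fderiv]
  have hld : lineDeriv ℝ (Fn M K τ α yhat) (y, u, μ) (a, b, c)
      = deriv (fun t : ℝ => Fn M K τ α yhat ((y, u, μ) + t • (a, b, c))) 0 := rfl
  rw [hld]
  have hfun : (fun t : ℝ => Fn M K τ α yhat ((y, u, μ) + t • (a, b, c)))
      = fun t : ℝ => Fn M K τ α yhat (y, u, μ)
          + t * Dfun M K τ α yhat y u μ a b c + t ^ 2 * Qfun M K τ α a b c :=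
    funext fun t => expand M K τ α yhat hM y u μ a b c t
  rw [hfun]
  set c0 := Fn M K τ α yhat (y, u, μ)
  set d0 := Dfun M K τ α yhat y u μ a b c
  set q0 := Qfun M K τ α a b c
  have h : HasDerivAt (fun t : ℝ => c0 + t * d0 + t ^ 2 * q0) (d0 + 2 * 0 ^ 1 * q0) 0 := by
    have h1 : HasDerivAt (fun t : ℝ => t) 1 0 := hasDerivAt_id 0
    have := ((h1.mul_const d0).const_add c0).add ((hasDerivAt_pow 2 (0:ℝ)).mul_const q0)
    refine this.congr_deriv ?_
    push_cast; ring
  simpa using h.deriv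

noncomputable def Gy (y μ : Fin Nt → Fin n → ℝ) (ℓ : Fin Nt) : Fin n → ℝ :=
  τ • (M *ᵥ (y ℓ - yhat ℓ)) + (M *ᵥ μ ℓ - M *ᵥ nxt μ ℓ + τ • (Kᵀ *ᵥ μ ℓ))

noncomputable def Gu (u μ : Fin Nt → Fin n → ℝ) (ℓ : Fin Nt) : Fin n → ℝ :=
  (τ * α) • (M *ᵥ u ℓ) - τ • (M *ᵥ μ ℓ)

lemma Dfun_eq (hM : M.IsSymm) (y u μ a b c : Fin Nt → Fin n → ℝ) :
    Dfun M K τ α yhat y u μ a b c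
      = ∑ ℓ, Gy M K τ yhat y μ ℓ ⬝ᵥ a ℓ + ∑ ℓ, Gu M τ α u μ ℓ ⬝ᵥ b ℓ
        + ∑ ℓ, Rv M K τ y u ℓ ⬝ᵥ c ℓ := by
  have hA : ∀ ℓ : Fin Nt,
      τ * ((y ℓ - yhat ℓ) ⬝ᵥ M *ᵥ a ℓ) + τ * α * (u ℓ ⬝ᵥ M *ᵥ b ℓ)
        + c ℓ ⬝ᵥ Rv M K τ y u ℓ + μ ℓ ⬝ᵥ Rv M K τ a b ℓ
      = (Gy M K τ yhat y μ ℓ ⬝ᵥ a ℓ + Gu M τ α u μ ℓ ⬝ᵥ b ℓ + Rv M K τ y u ℓ ⬝ᵥ c ℓ)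
        + ((M *ᵥ nxt μ ℓ) ⬝ᵥ a ℓ - (M *ᵥ μ ℓ) ⬝ᵥ prev a ℓ) := by
    intro ℓ
    rw [dotProduct_comm (c ℓ)]
    unfold Gy Gu Rv
    simp only [Matrix.mulVec_sub, dotProduct_sub, dotProduct_add, dotProduct_smul,
      sub_dotProduct, add_dotProduct, smul_dotProduct, smul_eq_mul]
    rw [swapM M hM (y ℓ) (a ℓ), swapM M hM (yhat ℓ) (a ℓ), swapM M hM (u ℓ) (b ℓ),
      swapM M hM (μ ℓ) (a ℓ), swapM M hM (μ ℓ) (prev a ℓ), swapK K (μ ℓ) (a ℓ),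
      swapM M hM (μ ℓ) (b ℓ)]
    ring
  unfold Dfun
  rw [Finset.sum_congr rfl fun ℓ _ => hA ℓ, Finset.sum_add_distrib,
    Finset.sum_sub_distrib]
  have hs : ∑ ℓ, (M *ᵥ μ ℓ) ⬝ᵥ prev a ℓ = ∑ ℓ, (M *ᵥ nxt μ ℓ) ⬝ᵥ a ℓ := by
    rw [dot_shift (fun ℓ => M *ᵥ μ ℓ) a]
    exact Finset.sum_congr rfl fun ℓ _ => by rw [mulVec_nxt]
  rw [hs, sub_self, add_zero, Finset.sum_add_distrib, Finset.sum_add_distrib]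

lemma eval_single (G : Fin Nt → Fin n → ℝ) (ℓ : Fin Nt) (i : Fin n) :
    ∑ k, G k ⬝ᵥ (Pi.single ℓ (Pi.single i 1) : Fin Nt → Fin n → ℝ) k = G ℓ i := by
  rw [Finset.sum_eq_single ℓ]
  · rw [Pi.single_eq_same, dotProduct_single, mul_one]
  · intro k _ hk; rw [Pi.single_eq_of_ne hk, dotProduct_zero]
  · intro h'; exact absurd (Finset.mem_univ _) h'

lemma allD_iff (hM : M.IsSymm) (y u μ : Fin Nt → Fin n → ℝ) :
    (∀ a b c : Fin Nt → Fin n → ℝ, Dfun M K τ α yhat y u μ a b c = 0)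
      ↔ ((∀ ℓ, Gy M K τ yhat y μ ℓ = 0) ∧ (∀ ℓ, Gu M τ α u μ ℓ = 0)
          ∧ (∀ ℓ, Rv M K τ y u ℓ = 0)) := by
  constructor
  · intro h
    refine ⟨fun ℓ => funext fun i => ?_, fun ℓ => funext fun i => ?_,
      fun ℓ => funext fun i => ?_⟩
    · have := h (Pi.single ℓ (Pi.single i 1)) 0 0
      rw [Dfun_eq M K τ α yhat hM] at this
      simpa [eval_single] using this
    · have := h 0 (Pi.single ℓ (Pi.single i 1)) 0
      rw [Dfun_eq M K τ α yhat hM] at this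
      simpa [eval_single] using this
    · have := h 0 0 (Pi.single ℓ (Pi.single i 1))
      rw [Dfun_eq M K τ α yhat hM] at this
      simpa [eval_single] using this
  · rintro ⟨h1, h2, h3⟩ a b c
    rw [Dfun_eq M K τ α yhat hM]
    simp [h1, h2, h3]

lemma trans1 (hM : M.IsSymm) (y μ : Fin Nt → Fin n → ℝ) :
    (τ • (((1 : Matrix (Fin Nt) (Fin Nt) ℝ) ⊗ₖ M).mulVec (fun q => y q.1 q.2))
        + ((((1 : Matrix (Fin Nt) (Fin Nt) ℝ) ⊗ₖ (τ • K)
            + ((Matrix.of fun ℓ k => if ℓ = k then 1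
              else if (k : ℕ) + 1 = (ℓ : ℕ) then -1 else 0 : Matrix (Fin Nt) (Fin Nt) ℝ)) ⊗ₖ M)ᵀ).mulVec
            (fun q => μ q.1 q.2))
      = τ • (((1 : Matrix (Fin Nt) (Fin Nt) ℝ) ⊗ₖ M).mulVec (fun q => yhat q.1 q.2)))
    ↔ ∀ ℓ, Gy M K τ yhat y μ ℓ = 0 := by
  have key : ∀ (ℓ : Fin Nt) (i : Fin n),
      (τ • (((1 : Matrix (Fin Nt) (Fin Nt) ℝ) ⊗ₖ M).mulVec (fun q => y q.1 q.2))
          + ((((1 : Matrix (Fin Nt) (Fin Nt) ℝ) ⊗ₖ (τ • K)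
              + ((Matrix.of fun ℓ k => if ℓ = k then 1
              else if (k : ℕ) + 1 = (ℓ : ℕ) then -1 else 0 : Matrix (Fin Nt) (Fin Nt) ℝ)) ⊗ₖ M)ᵀ).mulVec
              (fun q => μ q.1 q.2))) (ℓ, i)
        - (τ • (((1 : Matrix (Fin Nt) (Fin Nt) ℝ) ⊗ₖ M).mulVec (fun q => yhat q.1 q.2))) (ℓ, i)
      = Gy M K τ yhat y μ ℓ i := by
    intro ℓ i
    simp only [Matrix.transpose_add, Matrix.add_mulVec, Pi.add_apply, Pi.smul_apply,
      smul_eq_mul]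
    rw [kron_one_mulVec, kron_one_mulVec, kron_one_transpose_mulVec, kronC_transpose_mulVec]
    simp only [Matrix.of_apply, Matrix.transpose_smul, Matrix.smul_mulVec,
      Pi.smul_apply, smul_eq_mul]
    rw [sum_C_col]
    unfold Gy
    simp only [Pi.add_apply, Pi.sub_apply, Pi.smul_apply, Matrix.mulVec_sub, hM.eq,
      smul_eq_mul, mulVec_nxt, nxt_apply]
    ring
  constructor
  · intro h ℓ
    funext i
    rw [← key ℓ i, congrFun h (ℓ, i), sub_self]
    rfl
  · intro h
    funext q
    obtain ⟨ℓ, i⟩ := q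
    have hk := key ℓ i
    rw [h ℓ] at hk
    simp only [Pi.zero_apply] at hk
    exact sub_eq_zero.mp hk

lemma trans2 (u μ : Fin Nt → Fin n → ℝ) :
    ((τ * α) • (((1 : Matrix (Fin Nt) (Fin Nt) ℝ) ⊗ₖ M).mulVec (fun q => u q.1 q.2))
        - τ • (((1 : Matrix (Fin Nt) (Fin Nt) ℝ) ⊗ₖ M).mulVec (fun q => μ q.1 q.2)) = 0)
    ↔ ∀ ℓ, Gu M τ α u μ ℓ = 0 := by
  have key : ∀ (ℓ : Fin Nt) (i : Fin n),
      ((τ * α) • (((1 : Matrix (Fin Nt) (Fin Nt) ℝ) ⊗ₖ M).mulVec (fun q => u q.1 q.2))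
          - τ • (((1 : Matrix (Fin Nt) (Fin Nt) ℝ) ⊗ₖ M).mulVec (fun q => μ q.1 q.2))) (ℓ, i)
        = Gu M τ α u μ ℓ i := by
    intro ℓ i
    simp only [Pi.sub_apply, Pi.smul_apply, smul_eq_mul]
    rw [kron_one_mulVec, kron_one_mulVec]
    unfold Gu
    simp only [Pi.sub_apply, Pi.smul_apply, smul_eq_mul]
  constructor
  · intro h ℓ
    funext i
    rw [← key ℓ i, congrFun h (ℓ, i)]
    rfl
  · intro h
    funext q
    obtain ⟨ℓ, i⟩ := q
    have hk := key ℓ i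
    rw [h ℓ] at hk
    simpa using hk

lemma trans3 (y u : Fin Nt → Fin n → ℝ) :
    ((((1 : Matrix (Fin Nt) (Fin Nt) ℝ) ⊗ₖ (τ • K)
          + ((Matrix.of fun ℓ k => if ℓ = k then 1
              else if (k : ℕ) + 1 = (ℓ : ℕ) then -1 else 0 : Matrix (Fin Nt) (Fin Nt) ℝ)) ⊗ₖ M).mulVec
          (fun q => y q.1 q.2))
        - τ • (((1 : Matrix (Fin Nt) (Fin Nt) ℝ) ⊗ₖ M).mulVec (fun q => u q.1 q.2)) = 0)
    ↔ ∀ ℓ, Rv M K τ y u ℓ = 0 := by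
  have key : ∀ (ℓ : Fin Nt) (i : Fin n),
      ((((1 : Matrix (Fin Nt) (Fin Nt) ℝ) ⊗ₖ (τ • K)
            + ((Matrix.of fun ℓ k => if ℓ = k then 1
              else if (k : ℕ) + 1 = (ℓ : ℕ) then -1 else 0 : Matrix (Fin Nt) (Fin Nt) ℝ)) ⊗ₖ M).mulVec
            (fun q => y q.1 q.2))
          - τ • (((1 : Matrix (Fin Nt) (Fin Nt) ℝ) ⊗ₖ M).mulVec (fun q => u q.1 q.2))) (ℓ, i)
        = Rv M K τ y u ℓ i := by
    intro ℓ i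
    simp only [Matrix.add_mulVec, Pi.add_apply, Pi.sub_apply, Pi.smul_apply, smul_eq_mul]
    rw [kron_one_mulVec, kron_one_mulVec, kronC_mulVec]
    simp only [Matrix.of_apply, Matrix.smul_mulVec, Pi.smul_apply, smul_eq_mul]
    rw [sum_C_row]
    unfold Rv
    simp only [Pi.add_apply, Pi.sub_apply, Pi.smul_apply, smul_eq_mul, mulVec_prev,
      prev_apply]
    ring
  constructor
  · intro h ℓ
    funext i
    rw [← key ℓ i, congrFun h (ℓ, i)]
    rfl
  · intro h
    funext q
    obtain ⟨ℓ, i⟩ := q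
    have hk := key ℓ i
    rw [h ℓ] at hk
    simpa using hk

end DLKKT

open DLKKT

/-- The total derivative of the discrete Lagrangian of the implicit-Euler
discretized tracking-type optimal control problem vanishes at `(y, u, μ)` if and only if
`(y, u, μ)` satisfies the block KKT system `τ𝓜 y + 𝓚ᵀ μ = τ𝓜 ŷ`, `τα𝓜 u − τ𝓜 μ = 0`,
`𝓚 y − τ𝓜 u = 0`, where `𝓜 = I ⊗ M` and `𝓚 = I ⊗ (τK) + C ⊗ M` with `C` the implicit
Euler time-stepping matrix. -/
theorem discrete_lagrangian_deriv_zero_iff_kkt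
    (Nt n : ℕ) (hNt : 1 ≤ Nt) (hn : 1 ≤ n)
    (M K : Matrix (Fin n) (Fin n) ℝ) (hM : M.IsSymm)
    (τ α : ℝ) (hτ : 0 < τ)
    (yhat : Fin Nt → Fin n → ℝ)
    (y u μ : Fin Nt → Fin n → ℝ) :
    fderiv ℝ
      (fun p : (Fin Nt → Fin n → ℝ) × (Fin Nt → Fin n → ℝ) × (Fin Nt → Fin n → ℝ) =>
        ∑ ℓ : Fin Nt,
          (τ / 2 * ((p.1 ℓ - yhat ℓ) ⬝ᵥ M.mulVec (p.1 ℓ - yhat ℓ)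
              + α * (p.2.1 ℓ ⬝ᵥ M.mulVec (p.2.1 ℓ)))
            + p.2.2 ℓ ⬝ᵥ
              (M.mulVec (p.1 ℓ)
                - M.mulVec (if h : (ℓ : ℕ) = 0 then 0
                    else p.1 ⟨(ℓ : ℕ) - 1, lt_of_le_of_lt (Nat.sub_le _ _) ℓ.isLt⟩)
                + τ • K.mulVec (p.1 ℓ) - τ • M.mulVec (p.2.1 ℓ))))
      (y, u, μ) = 0 ↔
    (letI C : Matrix (Fin Nt) (Fin Nt) ℝ :=
        Matrix.of fun ℓ k => if ℓ = k then 1 else if (k : ℕ) + 1 = (ℓ : ℕ) then -1 else 0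
     letI 𝓜 : Matrix (Fin Nt × Fin n) (Fin Nt × Fin n) ℝ :=
        (1 : Matrix (Fin Nt) (Fin Nt) ℝ) ⊗ₖ M
     letI 𝓚 : Matrix (Fin Nt × Fin n) (Fin Nt × Fin n) ℝ :=
        (1 : Matrix (Fin Nt) (Fin Nt) ℝ) ⊗ₖ (τ • K) + C ⊗ₖ M
     letI Y : Fin Nt × Fin n → ℝ := fun q => y q.1 q.2
     letI U : Fin Nt × Fin n → ℝ := fun q => u q.1 q.2
     letI W : Fin Nt × Fin n → ℝ := fun q => μ q.1 q.2
     letI Yhat : Fin Nt × Fin n → ℝ := fun q => yhat q.1 q.2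
     (τ • 𝓜.mulVec Y + 𝓚ᵀ.mulVec W = τ • 𝓜.mulVec Yhat ∧
      (τ * α) • 𝓜.mulVec U - τ • 𝓜.mulVec W = 0 ∧
      𝓚.mulVec Y - τ • 𝓜.mulVec U = 0)) := by
  change fderiv ℝ (Fn M K τ α yhat) (y, u, μ) = 0 ↔ _
  have h0 : fderiv ℝ (Fn M K τ α yhat) (y, u, μ) = 0
      ↔ ∀ a b c : Fin Nt → Fin n → ℝ, Dfun M K τ α yhat y u μ a b c = 0 := by
    constructor
    · intro h a b c
      rw [← fderiv_eq M K τ α yhat hM, h]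
      rfl
    · intro h
      refine ContinuousLinearMap.ext fun v => ?_
      obtain ⟨a, b, c⟩ := v
      rw [show ((0 : _ →L[ℝ] ℝ) (a, b, c)) = 0 from rfl]
      rw [fderiv_eq M K τ α yhat hM]
      exact h a b c
  rw [h0, allD_iff M K τ α yhat hM y u μ]
  exact and_congr (trans1 M K τ yhat hM y μ).symm
    (and_congr (trans2 M τ α u μ).symm (trans3 M K τ y u).symm)
end

section
/- Let n₁, n₂, n₃ ≥ 1 and R ≥ 1. For d = 1, 2, 3 let b_d : [0,1] → ℝ^{n_d} be continuous vector-valued functions (the univariate basis functions), and for r = 1,…,R let g_{r,d} : [0,1] → ℝ be continuous. Suppose the weight function ω : [0,1]³ → ℝ is separable of rank R: ω(x₁,x₂,x₃) = Σ_{r=1}^{R} g_{r,1}(x₁) g_{r,2}(x₂) g_{r,3}(x₃). Define the mass matrix M ∈ ℝ^{(n₁n₂n₃)×(n₁n₂n₃)} with entries indexed by multi-indices i = (i₁,i₂,i₃), j = (j₁,j₂,j₃) by M_{i,j} = ∫_{[0,1]³} ω(x) ∏_{d=1}^{3} b_d(x_d)_{i_d} b_d(x_d)_{j_d} dx, and define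 univariate matrices M_r^{(d)} = ∫₀¹ g_{r,d}(t) b_d(t) b_d(t)ᵀ dt ∈ ℝ^{n_d × n_d}. Then M = Σ_{r=1}^{R} M_r^{(1)} ⊗ M_r^{(2)} ⊗ M_r^{(3)}, where ⊗ denotes the Kronecker product. -/
open Matrix Kronecker MeasureTheory

/-! Substituting the rank-`R` expansion of `ω`, each entry of the mass matrix becomes a sum of `R`
integrals of fully separated integrands `f₁(x₁) f₂(x₂) f₃(x₃)` over the cube; by Fubini each of
these is the product of three univariate integrals, which is exactly the corresponding entry of
`M_r^{(1)} ⊗ M_r^{(2)} ⊗ M_r^{(3)}`. Continuity on `[0,1]` supplies the integrability needed to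
exchange the integral with the finite sum. -/

section TripleProduct

variable {α β γ : Type*} [MeasurableSpace α] [MeasurableSpace β] [MeasurableSpace γ]
  {μ : Measure α} {ν : Measure β} {ρ : Measure γ}

theorem setIntegral_prod_prod_mul_mul [SFinite μ] [SFinite ν] [SFinite ρ]
    (f : α → ℝ) (g : β → ℝ) (h : γ → ℝ) (s : Set α) (t : Set β) (u : Set γ) :
    ∫ x in s ×ˢ t ×ˢ u, f x.1 * (g x.2.1 * h x.2.2) ∂μ.prod (ν.prod ρ) =
      (∫ x in s, f x ∂μ) * (∫ y in t, g y ∂ν) * ∫ z in u, h z ∂ρ := by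
  rw [setIntegral_prod_mul f (fun y : β × γ => g y.1 * h y.2), setIntegral_prod_mul, mul_assoc]

theorem MeasureTheory.IntegrableOn.prod_prod_mul_mul {f : α → ℝ} {g : β → ℝ} {h : γ → ℝ}
    {s : Set α} {t : Set β} {u : Set γ} [SFinite μ] [SFinite ν] [SFinite ρ]
    (hf : IntegrableOn f s μ) (hg : IntegrableOn g t ν) (hh : IntegrableOn h u ρ) :
    IntegrableOn (fun x : α × β × γ => f x.1 * (g x.2.1 * h x.2.2)) (s ×ˢ t ×ˢ u)
      (μ.prod (ν.prod ρ)) := by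
  rw [IntegrableOn, ← Measure.prod_restrict, ← Measure.prod_restrict]
  exact hf.mul_prod (hg.mul_prod hh)

theorem setIntegral_separable_weight_mul [SFinite μ] [SFinite ν] [SFinite ρ]
    {ι : Type*} [Fintype ι] {ω : α × β × γ → ℝ}
    {g₁ : ι → α → ℝ} {g₂ : ι → β → ℝ} {g₃ : ι → γ → ℝ}
    (hω : ∀ x₁ x₂ x₃, ω (x₁, x₂, x₃) = ∑ r, g₁ r x₁ * g₂ r x₂ * g₃ r x₃)
    {f₁ : α → ℝ} {f₂ : β → ℝ} {f₃ : γ → ℝ} {s : Set α} {t : Set β} {u : Set γ}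
    (h₁ : ∀ r, IntegrableOn (fun x => g₁ r x * f₁ x) s μ)
    (h₂ : ∀ r, IntegrableOn (fun y => g₂ r y * f₂ y) t ν)
    (h₃ : ∀ r, IntegrableOn (fun z => g₃ r z * f₃ z) u ρ) :
    ∫ x in s ×ˢ t ×ˢ u, ω x * f₁ x.1 * f₂ x.2.1 * f₃ x.2.2 ∂μ.prod (ν.prod ρ) =
      ∑ r, (∫ x in s, g₁ r x * f₁ x ∂μ) * (∫ y in t, g₂ r y * f₂ y ∂ν) *
        ∫ z in u, g₃ r z * f₃ z ∂ρ := by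
  have hsplit : (fun x : α × β × γ => ω x * f₁ x.1 * f₂ x.2.1 * f₃ x.2.2) = fun x =>
      ∑ r, g₁ r x.1 * f₁ x.1 * (g₂ r x.2.1 * f₂ x.2.1 * (g₃ r x.2.2 * f₃ x.2.2)) := by
    ext ⟨x₁, x₂, x₃⟩
    simp only [hω, Finset.sum_mul]
    exact Finset.sum_congr rfl fun r _ => by ring
  rw [hsplit, integral_finsetSum _ fun r _ => (h₁ r).prod_prod_mul_mul (h₂ r) (h₃ r)]
  exact Finset.sum_congr rfl fun r _ => setIntegral_prod_prod_mul_mul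
    (fun x => g₁ r x * f₁ x) (fun y => g₂ r y * f₂ y) (fun z => g₃ r z * f₃ z) s t u

end TripleProduct

theorem ContinuousOn.integrableOn_unitInterval_mul_mul {g : ℝ → ℝ} {n : ℕ} {b : ℝ → Fin n → ℝ}
    (hg : ContinuousOn g (Set.Icc 0 1)) (hb : ContinuousOn b (Set.Icc 0 1)) (i j : Fin n) :
    IntegrableOn (fun t => g t * (b t i * b t j)) (Set.Icc 0 1) :=
  (hg.mul (((continuous_apply i).comp_continuousOn hb).mul
    ((continuous_apply j).comp_continuousOn hb))).integrableOn_Icc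

theorem mass_matrix_low_rank_kronecker_general
    (n₁ n₂ n₃ R : ℕ)
    (b₁ : ℝ → Fin n₁ → ℝ) (b₂ : ℝ → Fin n₂ → ℝ) (b₃ : ℝ → Fin n₃ → ℝ)
    (hb₁ : ContinuousOn b₁ (Set.Icc 0 1))
    (hb₂ : ContinuousOn b₂ (Set.Icc 0 1))
    (hb₃ : ContinuousOn b₃ (Set.Icc 0 1))
    (g₁ g₂ g₃ : Fin R → ℝ → ℝ)
    (hg₁ : ∀ r, ContinuousOn (g₁ r) (Set.Icc 0 1))
    (hg₂ : ∀ r, ContinuousOn (g₂ r) (Set.Icc 0 1))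
    (hg₃ : ∀ r, ContinuousOn (g₃ r) (Set.Icc 0 1))
    (ω : ℝ × ℝ × ℝ → ℝ)
    (hω : ∀ x₁ x₂ x₃ : ℝ, ω (x₁, x₂, x₃) = ∑ r : Fin R, g₁ r x₁ * g₂ r x₂ * g₃ r x₃) :
    (Matrix.of fun (i j : (Fin n₁ × Fin n₂) × Fin n₃) =>
        ∫ x in (Set.Icc (0:ℝ) 1 ×ˢ Set.Icc (0:ℝ) 1 ×ˢ Set.Icc (0:ℝ) 1),
          ω x * (b₁ x.1 i.1.1 * b₁ x.1 j.1.1) * (b₂ x.2.1 i.1.2 * b₂ x.2.1 j.1.2) *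
            (b₃ x.2.2 i.2 * b₃ x.2.2 j.2)) =
      ∑ r : Fin R,
        (Matrix.of fun (i j : Fin n₁) => ∫ t in Set.Icc (0:ℝ) 1,
            g₁ r t * (b₁ t i * b₁ t j)) ⊗ₖ
          (Matrix.of fun i j => ∫ t in Set.Icc (0:ℝ) 1, g₂ r t * (b₂ t i * b₂ t j)) ⊗ₖ
          (Matrix.of fun i j => ∫ t in Set.Icc (0:ℝ) 1, g₃ r t * (b₃ t i * b₃ t j)) := by
  ext ⟨⟨i₁, i₂⟩, i₃⟩ ⟨⟨j₁, j₂⟩, j₃⟩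
  simp only [Matrix.sum_apply, Matrix.kroneckerMap_apply, Matrix.of_apply]
  rw [Measure.volume_eq_prod, Measure.volume_eq_prod]
  exact setIntegral_separable_weight_mul hω
    (fun r => (hg₁ r).integrableOn_unitInterval_mul_mul hb₁ i₁ j₁)
    (fun r => (hg₂ r).integrableOn_unitInterval_mul_mul hb₂ i₂ j₂)
    (fun r => (hg₃ r).integrableOn_unitInterval_mul_mul hb₃ i₃ j₃)

/-- If the weight function `ω` on the unit cube is separable of rank `R`,
`ω(x₁,x₂,x₃) = Σᵣ g_{r,1}(x₁) g_{r,2}(x₂) g_{r,3}(x₃)`, then the isogeometric mass matrix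
`M_{i,j} = ∫ ω(x) ∏_d b_d(x_d)_{i_d} b_d(x_d)_{j_d} dx` equals the rank-`R` sum of Kronecker
products of the univariate matrices `M_r^{(d)} = ∫ g_{r,d}(t) b_d(t) b_d(t)ᵀ dt`. -/
theorem mass_matrix_low_rank_kronecker
    (n₁ n₂ n₃ R : ℕ) (hn₁ : 1 ≤ n₁) (hn₂ : 1 ≤ n₂) (hn₃ : 1 ≤ n₃) (hR : 1 ≤ R)
    (b₁ : ℝ → Fin n₁ → ℝ) (b₂ : ℝ → Fin n₂ → ℝ) (b₃ : ℝ → Fin n₃ → ℝ)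
    (hb₁ : ContinuousOn b₁ (Set.Icc 0 1))
    (hb₂ : ContinuousOn b₂ (Set.Icc 0 1))
    (hb₃ : ContinuousOn b₃ (Set.Icc 0 1))
    (g₁ g₂ g₃ : Fin R → ℝ → ℝ)
    (hg₁ : ∀ r, ContinuousOn (g₁ r) (Set.Icc 0 1))
    (hg₂ : ∀ r, ContinuousOn (g₂ r) (Set.Icc 0 1))
    (hg₃ : ∀ r, ContinuousOn (g₃ r) (Set.Icc 0 1))
    (ω : ℝ × ℝ × ℝ → ℝ)
    (hω : ∀ x₁ x₂ x₃ : ℝ, ω (x₁, x₂, x₃) = ∑ r : Fin R, g₁ r x₁ * g₂ r x₂ * g₃ r x₃) :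
    (Matrix.of fun (i j : (Fin n₁ × Fin n₂) × Fin n₃) =>
        ∫ x in (Set.Icc (0:ℝ) 1 ×ˢ Set.Icc (0:ℝ) 1 ×ˢ Set.Icc (0:ℝ) 1),
          ω x * (b₁ x.1 i.1.1 * b₁ x.1 j.1.1) * (b₂ x.2.1 i.1.2 * b₂ x.2.1 j.1.2) *
            (b₃ x.2.2 i.2 * b₃ x.2.2 j.2)) =
      ∑ r : Fin R,
        (Matrix.of fun (i j : Fin n₁) => ∫ t in Set.Icc (0:ℝ) 1,
            g₁ r t * (b₁ t i * b₁ t j)) ⊗ₖ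
          (Matrix.of fun i j => ∫ t in Set.Icc (0:ℝ) 1, g₂ r t * (b₂ t i * b₂ t j)) ⊗ₖ
          (Matrix.of fun i j => ∫ t in Set.Icc (0:ℝ) 1, g₃ r t * (b₃ t i * b₃ t j)) :=
  mass_matrix_low_rank_kronecker_general n₁ n₂ n₃ R b₁ b₂ b₃ hb₁ hb₂ hb₃ g₁ g₂ g₃ hg₁ hg₂ hg₃ ω hω
end
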